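/- Let Q be a symmetric positive definite n×n real matrix, ε > 0, and b ∈ ℝⁿ. On a probability space, let (A_k)_{k≥1} and (C_k)_{k≥1} be sequences of random matrices in ℝ^{n×n} and ℝ^{q×n} respectively such that: (i) for each k ≥ 1, the pair (A_k, C_k) is independent of (A_1, C_1, …, A_{k−1}, C_{k−1}); (ii) for each k ≥ 1, E[A_kᵀ Q A_k + C_kᵀ C_k] ⪯ Q − ε·I. Define ξ_1 = b and ξ_{k+1} = A_k ξ_k for k ≥ 1. Then Σ_{k=1}^{∞} E[‖C_k ξ_k‖²] ≤ bᵀ Q b. -/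

import Mathlib

/-!
`V k = E[ξ_kᵀ Q ξ_k]` is a Lyapunov function for the recursion. Since `ξ_k` is a measurable
function of the earlier pairs, it is independent of `(A_k, C_k)`, so the expectation of a
quadratic form `ξ_kᵀ M_k ξ_k` with `M_k` built from `(A_k, C_k)` equals that of
`ξ_kᵀ E[M_k] ξ_k`. With `M_k = A_kᵀ Q A_k + C_kᵀ C_k` and `E[M_k] ⪯ Q` this gives
`V (k + 1) + E‖C_k ξ_k‖² ≤ V k`, and telescoping with `V ≥ 0` bounds the series by
`V 1 = bᵀ Q b`. The same independence argument shows inductively that the second moments of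
`ξ_k` are finite.
-/

open MeasureTheory ProbabilityTheory Matrix

namespace Matrix

variable {ι κ R : Type*} [Fintype ι] [CommSemiring R]

theorem dotProduct_mulVec_eq_sum_mul (M : Matrix ι ι R) (x : ι → R) :
    x ⬝ᵥ M *ᵥ x = ∑ i, ∑ j, x i * x j * M i j := by
  simp only [dotProduct, mulVec, Finset.mul_sum]
  exact Finset.sum_congr rfl fun i _ => Finset.sum_congr rfl fun j _ => by ring

theorem mulVec_dotProduct_mulVec_mulVec [Fintype κ] (A : Matrix κ ι R) (Q : Matrix κ κ R)
    (x : ι → R) :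
    A *ᵥ x ⬝ᵥ Q *ᵥ (A *ᵥ x) = x ⬝ᵥ (Aᵀ * Q * A) *ᵥ x := by
  rw [← mulVec_mulVec, ← mulVec_mulVec, dotProduct_mulVec x, vecMul_transpose]

theorem mulVec_apply_mul_mulVec_apply (A : Matrix κ ι R) (x : ι → R) (i j : κ) :
    (A *ᵥ x) i * (A *ᵥ x) j = x ⬝ᵥ vecMulVec (A i) (A j) *ᵥ x := by
  rw [vecMulVec_mulVec, dotProduct_smul, op_smul_eq_mul, dotProduct_comm x]
  rfl

theorem dotProduct_mulVec_le_of_posSemidef_sub {Q N : Matrix ι ι ℝ} (h : (Q - N).PosSemidef)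
    (x : ι → ℝ) : x ⬝ᵥ N *ᵥ x ≤ x ⬝ᵥ Q *ᵥ x := by
  have := h.dotProduct_mulVec_nonneg x
  rw [sub_mulVec, dotProduct_sub, star_trivial] at this
  linarith

end Matrix

theorem tsum_le_of_add_le_of_nonneg {V G : ℕ → ℝ} (hG : ∀ m, 0 ≤ G m) (hV : ∀ m, 0 ≤ V m)
    (hstep : ∀ m, V (m + 1) + G m ≤ V m) : ∑' m, G m ≤ V 0 := by
  have hpartial (N : ℕ) : ∑ m ∈ Finset.range N, G m + V N ≤ V 0 := by
    induction N with
    | zero => simp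
    | succ N ih => rw [Finset.sum_range_succ]; linarith [hstep N]
  exact Real.tsum_le_of_sum_range_le hG fun N => by linarith [hpartial N, hV N]

namespace ProbabilityTheory.IndepFun

variable {Ω ι : Type*} [MeasurableSpace Ω] {μ : Measure Ω} {M : Ω → Matrix ι ι ℝ}
  {X : Ω → ι → ℝ}

theorem apply_mul_apply_entry (hind : IndepFun (fun ω i j => M ω i j) X μ) (i j : ι) :
    IndepFun (fun ω => X ω i * X ω j) (fun ω => M ω i j) μ :=
  hind.symm.comp (φ := fun x : ι → ℝ => x i * x j) (ψ := fun m : ι → ι → ℝ => m i j)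
    (by fun_prop) (by fun_prop)

variable [Fintype ι]

theorem integrable_dotProduct_mulVec (hind : IndepFun (fun ω i j => M ω i j) X μ)
    (hM : ∀ i j, Integrable (fun ω => M ω i j) μ)
    (hX : ∀ i j, Integrable (fun ω => X ω i * X ω j) μ) :
    Integrable (fun ω => X ω ⬝ᵥ M ω *ᵥ X ω) μ := by
  simp only [dotProduct_mulVec_eq_sum_mul]
  exact integrable_finsetSum _ fun i _ => integrable_finsetSum _ fun j _ =>
    (hind.apply_mul_apply_entry i j).integrable_mul (hX i j) (hM i j)

theorem integral_dotProduct_mulVec (hind : IndepFun (fun ω i j => M ω i j) X μ)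
    (hM : ∀ i j, Integrable (fun ω => M ω i j) μ)
    (hX : ∀ i j, Integrable (fun ω => X ω i * X ω j) μ) :
    ∫ ω, X ω ⬝ᵥ M ω *ᵥ X ω ∂μ = ∫ ω, X ω ⬝ᵥ (of fun i j => ∫ ω', M ω' i j ∂μ) *ᵥ X ω ∂μ := by
  have hint (i j : ι) : Integrable (fun ω => X ω i * X ω j * M ω i j) μ :=
    (hind.apply_mul_apply_entry i j).integrable_mul (hX i j) (hM i j)
  simp only [dotProduct_mulVec_eq_sum_mul, of_apply]
  rw [integral_finsetSum _ fun i _ => integrable_finsetSum _ fun j _ => hint i j,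
    integral_finsetSum _ fun i _ => integrable_finsetSum _ fun j _ => (hX i j).mul_const _]
  refine Finset.sum_congr rfl fun i _ => ?_
  rw [integral_finsetSum _ fun j _ => hint i j,
    integral_finsetSum _ fun j _ => (hX i j).mul_const _]
  refine Finset.sum_congr rfl fun j _ => ?_
  rw [(hind.apply_mul_apply_entry i j).integral_fun_mul_eq_mul_integral (hX i j).1 (hM i j).1,
    integral_mul_const]

end ProbabilityTheory.IndepFun

section OneStep

variable {Ω ι κ : Type*} [MeasurableSpace Ω] {μ : Measure Ω}

theorem integrable_transpose_mul_mul_apply {κ' ι' : Type*} [Fintype κ] [Fintype κ']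
    {A : Ω → Matrix κ ι ℝ} {B : Ω → Matrix κ' ι' ℝ} (P : Matrix κ κ' ℝ)
    (hA : ∀ k i, MemLp (fun ω => A ω k i) 2 μ) (hB : ∀ k j, MemLp (fun ω => B ω k j) 2 μ)
    (i : ι) (j : ι') : Integrable (fun ω => ((A ω)ᵀ * P * B ω) i j) μ := by
  simp only [mul_apply, transpose_apply, Finset.sum_mul]
  refine integrable_finsetSum _ fun l _ => integrable_finsetSum _ fun k _ => ?_
  simpa only [Pi.mul_apply, mul_right_comm] using
    ((hA k i).integrable_mul (hB l j)).mul_const (P k l)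

theorem integrable_dotProduct_mulVec_const [Fintype ι] {X : Ω → ι → ℝ}
    (hX : ∀ i j, Integrable (fun ω => X ω i * X ω j) μ) (P : Matrix ι ι ℝ) :
    Integrable (fun ω => X ω ⬝ᵥ P *ᵥ X ω) μ := by
  simp only [dotProduct_mulVec_eq_sum_mul]
  exact integrable_finsetSum _ fun i _ => integrable_finsetSum _ fun j _ =>
    (hX i j).mul_const _

theorem integrable_mulVec_apply_mul_mulVec_apply [Fintype ι] {A : Ω → Matrix κ ι ℝ}
    {X : Ω → ι → ℝ}
    (hind : IndepFun (fun ω i j => A ω i j) X μ) (hA : ∀ k i, MemLp (fun ω => A ω k i) 2 μ)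
    (hX : ∀ i j, Integrable (fun ω => X ω i * X ω j) μ) (k l : κ) :
    Integrable (fun ω => (A ω *ᵥ X ω) k * (A ω *ᵥ X ω) l) μ := by
  simp only [mulVec_apply_mul_mulVec_apply]
  refine IndepFun.integrable_dotProduct_mulVec ?_ (fun i j => (hA k i).integrable_mul (hA l j)) hX
  exact hind.comp (φ := fun a : κ → ι → ℝ => fun i j => a k i * a l j) (by fun_prop)
    measurable_id

theorem integral_energy_step [Fintype ι] [Fintype κ] {A : Ω → Matrix ι ι ℝ}
    {C : Ω → Matrix κ ι ℝ} {X : Ω → ι → ℝ} {Q : Matrix ι ι ℝ}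
    (hind : IndepFun (fun ω => ((fun i j => A ω i j), fun i j => C ω i j)) X μ)
    (hA : ∀ i j, MemLp (fun ω => A ω i j) 2 μ) (hC : ∀ k j, MemLp (fun ω => C ω k j) 2 μ)
    (hX : ∀ i j, Integrable (fun ω => X ω i * X ω j) μ)
    (hLMI : (Q - of fun i j => ∫ ω, ((A ω)ᵀ * Q * A ω + (C ω)ᵀ * C ω) i j ∂μ).PosSemidef) :
    ∫ ω, A ω *ᵥ X ω ⬝ᵥ Q *ᵥ (A ω *ᵥ X ω) ∂μ + ∫ ω, C ω *ᵥ X ω ⬝ᵥ C ω *ᵥ X ω ∂μ ≤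
      ∫ ω, X ω ⬝ᵥ Q *ᵥ X ω ∂μ := by
  classical
  have hAX : ∀ i j, Integrable (fun ω => (A ω *ᵥ X ω) i * (A ω *ᵥ X ω) j) μ :=
    integrable_mulVec_apply_mul_mulVec_apply (hind.comp measurable_fst measurable_id) hA hX
  have hCX : ∀ k l, Integrable (fun ω => (C ω *ᵥ X ω) k * (C ω *ᵥ X ω) l) μ :=
    integrable_mulVec_apply_mul_mulVec_apply (hind.comp measurable_snd measurable_id) hC hX
  have hM (i j : ι) : Integrable (fun ω => ((A ω)ᵀ * Q * A ω + (C ω)ᵀ * C ω) i j) μ := by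
    simpa only [Matrix.add_apply, Matrix.mul_one, Pi.add_def] using
      (integrable_transpose_mul_mul_apply Q hA hA i j).add
        (integrable_transpose_mul_mul_apply 1 hC hC i j)
  have hindM : IndepFun (fun ω i j => ((A ω)ᵀ * Q * A ω + (C ω)ᵀ * C ω) i j) X μ :=
    hind.comp (φ := fun p => fun i j => ((of p.1)ᵀ * Q * of p.1 + (of p.2)ᵀ * of p.2) i j)
      (Continuous.measurable (by fun_prop)) measurable_id
  calc _ = ∫ ω, X ω ⬝ᵥ ((A ω)ᵀ * Q * A ω + (C ω)ᵀ * C ω) *ᵥ X ω ∂μ := by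
        rw [← integral_add (integrable_dotProduct_mulVec_const hAX Q)
          (by simpa only [one_mulVec] using integrable_dotProduct_mulVec_const hCX 1)]
        congr with ω
        rw [add_mulVec, dotProduct_add, ← mulVec_dotProduct_mulVec_mulVec,
          ← Matrix.mul_one (C ω)ᵀ, ← mulVec_dotProduct_mulVec_mulVec, one_mulVec]
    _ = ∫ ω, X ω ⬝ᵥ (of fun i j => ∫ ω', ((A ω')ᵀ * Q * A ω' + (C ω')ᵀ * C ω') i j ∂μ) *ᵥ X ω
          ∂μ :=
        hindM.integral_dotProduct_mulVec hM hX
    _ ≤ _ := integral_mono (integrable_dotProduct_mulVec_const hX _)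
        (integrable_dotProduct_mulVec_const hX Q) fun ω =>
          dotProduct_mulVec_le_of_posSemidef_sub hLMI (X ω)

end OneStep

theorem exists_measurable_eq_comp_past {Ω : Type*} {n : ℕ}
    {A : ℕ → Ω → Matrix (Fin n) (Fin n) ℝ} {ξ : ℕ → Ω → Fin n → ℝ} {b : Fin n → ℝ}
    (hξ₁ : ∀ ω, ξ 1 ω = b)
    (hrec : ∀ k, 1 ≤ k → ∀ ω, ξ (k + 1) ω = A k ω *ᵥ ξ k ω) (m : ℕ) :
    ∃ F : (Fin m → Fin n → Fin n → ℝ) → Fin n → ℝ, Measurable F ∧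
      ∀ ω, ξ (m + 1) ω = F fun l i j => A (l.val + 1) ω i j := by
  induction m with
  | zero => exact ⟨fun _ => b, measurable_const, hξ₁⟩
  | succ m ih =>
    obtain ⟨F, hF, hξF⟩ := ih
    refine ⟨fun t => of (t (Fin.last m)) *ᵥ F fun l : Fin m => t l.castSucc, ?_, fun ω => ?_⟩
    · have hpast : Measurable fun (t : Fin (m + 1) → Fin n → Fin n → ℝ) (l : Fin m) =>
          t l.castSucc := by fun_prop
      exact (Continuous.measurable (by fun_prop) :
        Measurable fun p : (Fin n → Fin n → ℝ) × (Fin n → ℝ) => of p.1 *ᵥ p.2).comp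
          ((measurable_pi_apply _).prodMk (hF.comp hpast))
    · rw [hrec (m + 1) m.succ_pos, hξF]
      rfl

theorem output_energy_le_quadratic_form_general
    {Ω : Type*} [MeasurableSpace Ω] (μ : Measure Ω) [IsProbabilityMeasure μ]
    {n q : ℕ}
    (Q : Matrix (Fin n) (Fin n) ℝ) (hQ : Q.PosDef)
    (ε : ℝ) (hε : 0 < ε) (b : Fin n → ℝ)
    (A : ℕ → Ω → Matrix (Fin n) (Fin n) ℝ)
    (C : ℕ → Ω → Matrix (Fin q) (Fin n) ℝ)
    (hA2 : ∀ k i j, MemLp (fun ω => A k ω i j) 2 μ)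
    (hC2 : ∀ k i j, MemLp (fun ω => C k ω i j) 2 μ)
    (hindep : ∀ k, 1 ≤ k →
      IndepFun (fun ω => ((fun i j => A k ω i j), fun i j => C k ω i j))
        (fun ω => fun l : Fin (k - 1) =>
          ((fun i j => A (l.val + 1) ω i j), fun i j => C (l.val + 1) ω i j)) μ)
    (hLMI : ∀ k, 1 ≤ k →
      (Q - ε • (1 : Matrix (Fin n) (Fin n) ℝ) -
        Matrix.of fun i j =>
          ∫ ω, ((A k ω)ᵀ * Q * A k ω + (C k ω)ᵀ * C k ω) i j ∂μ).PosSemidef)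
    (ξ : ℕ → Ω → Fin n → ℝ)
    (hξ₁ : ∀ ω, ξ 1 ω = b)
    (hrec : ∀ k, 1 ≤ k → ∀ ω, ξ (k + 1) ω = (A k ω).mulVec (ξ k ω)) :
    ∑' k : ℕ,
        ∫ ω, (C (k + 1) ω).mulVec (ξ (k + 1) ω) ⬝ᵥ (C (k + 1) ω).mulVec (ξ (k + 1) ω) ∂μ ≤
      b ⬝ᵥ Q.mulVec b := by
  have hind (m : ℕ) : IndepFun (fun ω => ((fun i j => A (m + 1) ω i j),
      fun i j => C (m + 1) ω i j)) (ξ (m + 1)) μ := by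
    obtain ⟨F, hF, hξF⟩ := exists_measurable_eq_comp_past hξ₁ hrec m
    rw [funext hξF]
    exact (hindep (m + 1) m.succ_pos).comp measurable_id
      (hF.comp (measurable_pi_lambda _ fun l => (measurable_pi_apply l).fst))
  have hmom (m : ℕ) : ∀ i j, Integrable (fun ω => ξ (m + 1) ω i * ξ (m + 1) ω j) μ := by
    induction m with
    | zero => simp only [hξ₁]; exact fun i j => integrable_const _
    | succ m ih =>
      simp only [hrec (m + 1) m.succ_pos]
      exact integrable_mulVec_apply_mul_mulVec_apply
        ((hind m).comp measurable_fst measurable_id) (hA2 (m + 1)) ih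
  have hdom (m : ℕ) : (Q - of fun i j => ∫ ω, ((A (m + 1) ω)ᵀ * Q * A (m + 1) ω +
      (C (m + 1) ω)ᵀ * C (m + 1) ω) i j ∂μ).PosSemidef := by
    have := (hLMI (m + 1) m.succ_pos).add (PosSemidef.one.smul hε.le)
    rwa [sub_right_comm, sub_add_cancel] at this
  refine (tsum_le_of_add_le_of_nonneg (V := fun m => ∫ ω, ξ (m + 1) ω ⬝ᵥ Q *ᵥ ξ (m + 1) ω ∂μ)
    (fun m => integral_nonneg fun ω => ?_) (fun m => integral_nonneg fun ω => ?_)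
    fun m => ?_).trans_eq (by simp [hξ₁])
  · exact dotProduct_self_star_nonneg _
  · simpa using hQ.posSemidef.dotProduct_mulVec_nonneg (ξ (m + 1) ω)
  · simp only [hrec (m + 1) m.succ_pos]
    exact integral_energy_step (hind m) (hA2 (m + 1)) (hC2 (m + 1)) (hmom m) (hdom m)

/-- Let `Q` be symmetric positive definite, `ε > 0` and `b ∈ ℝⁿ`. Let
`(A_k)_{k ≥ 1}`, `(C_k)_{k ≥ 1}` be square-integrable random matrices such that each pair
`(A_k, C_k)` is independent of the preceding pairs `(A_1, C_1, …, A_{k-1}, C_{k-1})` and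
`E[A_kᵀ Q A_k + C_kᵀ C_k] ⪯ Q - ε • I` for every `k ≥ 1`. For the process `ξ_1 = b`,
`ξ_{k+1} = A_k ξ_k` (`k ≥ 1`), the output energy satisfies
`Σ_{k=1}^∞ E[‖C_k ξ_k‖²] ≤ bᵀ Q b`. -/
theorem output_energy_le_quadratic_form
    {Ω : Type*} [MeasurableSpace Ω] (μ : Measure Ω) [IsProbabilityMeasure μ]
    {n q : ℕ}
    (Q : Matrix (Fin n) (Fin n) ℝ) (hQsymm : Q.IsSymm) (hQ : Q.PosDef)
    (ε : ℝ) (hε : 0 < ε) (b : Fin n → ℝ)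
    (A : ℕ → Ω → Matrix (Fin n) (Fin n) ℝ)
    (C : ℕ → Ω → Matrix (Fin q) (Fin n) ℝ)
    (hAmeas : ∀ k, Measurable fun ω i j => A k ω i j)
    (hCmeas : ∀ k, Measurable fun ω i j => C k ω i j)
    (hA2 : ∀ k i j, MemLp (fun ω => A k ω i j) 2 μ)
    (hC2 : ∀ k i j, MemLp (fun ω => C k ω i j) 2 μ)
    (hindep : ∀ k, 1 ≤ k →
      IndepFun (fun ω => ((fun i j => A k ω i j), fun i j => C k ω i j))
        (fun ω => fun l : Fin (k - 1) =>
          ((fun i j => A (l.val + 1) ω i j), fun i j => C (l.val + 1) ω i j)) μ)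
    (hLMI : ∀ k, 1 ≤ k →
      (Q - ε • (1 : Matrix (Fin n) (Fin n) ℝ) -
        Matrix.of fun i j =>
          ∫ ω, ((A k ω)ᵀ * Q * A k ω + (C k ω)ᵀ * C k ω) i j ∂μ).PosSemidef)
    (ξ : ℕ → Ω → Fin n → ℝ)
    (hξ₁ : ∀ ω, ξ 1 ω = b)
    (hrec : ∀ k, 1 ≤ k → ∀ ω, ξ (k + 1) ω = (A k ω).mulVec (ξ k ω)) :
    ∑' k : ℕ,
        ∫ ω, (C (k + 1) ω).mulVec (ξ (k + 1) ω) ⬝ᵥ (C (k + 1) ω).mulVec (ξ (k + 1) ω) ∂μ ≤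
      b ⬝ᵥ Q.mulVec b :=
  output_energy_le_quadratic_form_general μ Q hQ ε hε b A C hA2 hC2 hindep hLMI ξ hξ₁ hrec
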